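/- For every stage k ∈ {0,…,N−1} and every state-action pair (s,a), the optimal cost-to-go Q-values satisfy the Bellman recursion Q*_k(s,a) = Σ_{j∈S} p_k(s,a,j)(g_k(s,a,j) + min_{b∈A} Q*_{k+1}(j,b)), where Q*_k(s,a) is the minimum over all choices of the remaining decision rules (π_{k+1},…,π_{N−1}) of the expected cost accumulated from stage k onward when the state at stage k is s, the action at stage k is a, and subsequent actions follow (π_{k+1},…,π_{N−1}), and Q*_N(s,a) = g_N(s). -/

import Mathlib

open Finset

noncomputable section

/-- The state at time `m` (counting from the base stage) of the trajectory with base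
state `s` and subsequent states `τ 0, …, τ (M-1)`, so `traj M s τ 0 = s` and
`traj M s τ (m+1) = τ m`. -/
def traj {S : Type*} (M : ℕ) (s : S) (τ : Fin M → S) : ℕ → S
  | 0 => s
  | m + 1 => if h : m < M then τ ⟨m, h⟩ else s

/-- Expected cost accumulated from stage `k` onward when the state at stage `k` is `s`,
the action at stage `k` is `a`, and the actions at stages `k+1,…,N-1` are chosen
according to the decision rules `pol (k+1), …, pol (N-1)`.  The sum runs over all
trajectories `(s_{k+1},…,s_N) ∈ S^{N-k}`, encoded as `τ : Fin (N-k) → S` with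
`s_{k+1+m} = τ m`. -/
def costToGo {S A : Type*} [Fintype S] [DecidableEq S] [Fintype A] (N k : ℕ)
    (p g : ℕ → S → A → S → ℝ) (gN : S → ℝ) (pol : ℕ → S → A) (s : S) (a : A) : ℝ :=
  ∑ τ : Fin (N - k) → S,
    (p k s a (traj (N - k) s τ 1) *
        ∏ m : Fin (N - k - 1),
          p (k + 1 + (m : ℕ)) (traj (N - k) s τ ((m : ℕ) + 1))
            (pol (k + 1 + (m : ℕ)) (traj (N - k) s τ ((m : ℕ) + 1)))
            (traj (N - k) s τ ((m : ℕ) + 2))) *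
      ((g k s a (traj (N - k) s τ 1) +
          ∑ m : Fin (N - k - 1),
            g (k + 1 + (m : ℕ)) (traj (N - k) s τ ((m : ℕ) + 1))
              (pol (k + 1 + (m : ℕ)) (traj (N - k) s τ ((m : ℕ) + 1)))
              (traj (N - k) s τ ((m : ℕ) + 2))) + gN (traj (N - k) s τ (N - k)))

/-- The optimal cost-to-go Q-value at stage `k`: the minimum over all choices of the
remaining decision rules of the expected cost from stage `k` onward, with
`Qstar N … N s a = gN s` at the terminal stage. -/
def Qstar {S A : Type*} [Fintype S] [DecidableEq S] [Fintype A] (N : ℕ)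
    (p g : ℕ → S → A → S → ℝ) (gN : S → ℝ) (k : ℕ) (s : S) (a : A) : ℝ :=
  if k < N then ⨅ pol : ℕ → S → A, costToGo N k p g gN pol s a else gN s

/-! ### Auxiliary lemmas -/

set_option linter.unusedSectionVars false

section TrajHelpers
variable {S : Type*}

@[simp] lemma traj_zero (M : ℕ) (s : S) (τ : Fin M → S) : traj M s τ 0 = s := rfl

lemma traj_cons {n : ℕ} (s j : S) (τ' : Fin n → S) (i : ℕ) (hi : i ≤ n) :
    traj (n + 1) s (Fin.cons j τ') (i + 1) = traj n j τ' i := by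
  cases i with
  | zero => simp [traj]
  | succ i' =>
    have h1 : i' + 1 < n + 1 := by omega
    have h2 : i' < n := by omega
    simp only [traj, dif_pos h1, dif_pos h2]
    exact Fin.cons_succ (α := fun _ => S) j τ' ⟨i', h2⟩

@[simp] lemma traj_cons_one {n : ℕ} (s j : S) (τ' : Fin n → S) :
    traj (n + 1) s (Fin.cons j τ') 1 = j := traj_cons s j τ' 0 (by omega)

@[simp] lemma traj_cons_succ {n : ℕ} (s j : S) (τ' : Fin n → S) (m : Fin n) :
    traj (n + 1) s (Fin.cons j τ') ((m : ℕ) + 1) = traj n j τ' (m : ℕ) :=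
  traj_cons s j τ' m (by omega)

@[simp] lemma traj_cons_two {n : ℕ} (s j : S) (τ' : Fin n → S) (m : Fin n) :
    traj (n + 1) s (Fin.cons j τ') ((m : ℕ) + 2) = traj n j τ' ((m : ℕ) + 1) :=
  traj_cons s j τ' ((m : ℕ) + 1) (by omega)

@[simp] lemma traj_cons_last {n : ℕ} (s j : S) (τ' : Fin n → S) :
    traj (n + 1) s (Fin.cons j τ') (n + 1) = traj n j τ' n := traj_cons s j τ' n le_rfl

lemma sum_fun_succ [Fintype S] {M : ℕ} (f : (Fin (M + 1) → S) → ℝ) :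
    ∑ τ : Fin (M + 1) → S, f τ = ∑ j : S, ∑ τ' : Fin M → S, f (Fin.cons j τ') := by
  rw [← Equiv.sum_comp (Fin.consEquiv fun _ => S) f, Fintype.sum_prod_type]
  rfl

lemma sum_split {ι : Type*} [Fintype ι] (P Gc : ℝ) (F H K : ι → ℝ)
    (hW : ∑ x, F x = 1) :
    ∑ x, (P * F x) * ((Gc + H x) + K x) = P * (Gc + ∑ x, F x * (H x + K x)) := by
  have h : ∀ x ∈ univ, (P * F x) * ((Gc + H x) + K x)
      = (P * Gc) * F x + P * (F x * (H x + K x)) := fun x _ => by ring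
  rw [Finset.sum_congr rfl h, Finset.sum_add_distrib, ← Finset.mul_sum, ← Finset.mul_sum,
    hW, mul_one, mul_add]

end TrajHelpers

lemma sum_chain {S A : Type*} [Fintype S] [DecidableEq S] [Fintype A]
    (N : ℕ) (p : ℕ → S → A → S → ℝ)
    (hp1 : ∀ n < N, ∀ i a, ∑ j, p n i a j = 1) (pol : ℕ → S → A) :
    ∀ (M k' : ℕ), k' + M ≤ N → ∀ (s : S),
      ∑ τ : Fin M → S, ∏ m : Fin M,
        p (k' + (m : ℕ)) (traj M s τ (m : ℕ)) (pol (k' + (m : ℕ)) (traj M s τ (m : ℕ)))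
          (traj M s τ ((m : ℕ) + 1)) = 1 := by
  intro M
  induction M with
  | zero => intro k' h s; simp
  | succ M ih =>
    intro k' h s
    rw [sum_fun_succ]
    have harith : ∀ i : Fin M, k' + ((i : ℕ) + 1) = (k' + 1) + (i : ℕ) := fun i => by omega
    have h2 : ∀ i : Fin M, ((i : ℕ) + 1) + 1 = (i : ℕ) + 2 := fun i => rfl
    simp only [Fin.prod_univ_succ, Fin.val_zero, add_zero, zero_add, Fin.val_succ,
      traj_zero, traj_cons_one, h2, traj_cons_succ, traj_cons_two, harith]
    have h1 : ∀ j : S, ∑ τ' : Fin M → S, ∏ m : Fin M,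
        p ((k' + 1) + (m : ℕ)) (traj M j τ' (m : ℕ))
          (pol ((k' + 1) + (m : ℕ)) (traj M j τ' (m : ℕ))) (traj M j τ' ((m : ℕ) + 1)) = 1 :=
      fun j => ih (k' + 1) (by omega) j
    simp only [← Finset.mul_sum, h1, mul_one]
    exact hp1 k' (by omega) s (pol k' s)

section Main
variable {S A : Type*} [Fintype S] [DecidableEq S] [Nonempty S] [Fintype A] [Nonempty A]

lemma costToGo_base (N k : ℕ) (hk : k + 1 = N) (p g : ℕ → S → A → S → ℝ) (gN : S → ℝ)
    (pol : ℕ → S → A) (s : S) (a : A) :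
    costToGo N k p g gN pol s a = ∑ j, p k s a j * (g k s a j + gN j) := by
  subst hk
  unfold costToGo
  rw [show k + 1 - k = 1 from by omega]
  rw [show (1 : ℕ) - 1 = 0 from rfl]
  refine Fintype.sum_equiv (Equiv.funUnique (Fin 1) S) _ _ fun τ => ?_
  have h1 : traj 1 s τ 1 = τ 0 := by simp [traj]
  simp [h1, Equiv.funUnique]

lemma costToGo_step (N M' k : ℕ) (hk : k + 2 + M' = N) (p g : ℕ → S → A → S → ℝ)
    (gN : S → ℝ) (hp1 : ∀ n < N, ∀ i a, ∑ j, p n i a j = 1)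
    (pol : ℕ → S → A) (s : S) (a : A) :
    costToGo N k p g gN pol s a
      = ∑ j, p k s a j * (g k s a j + costToGo N (k + 1) p g gN pol j (pol (k + 1) j)) := by
  have hW := sum_chain N p hp1 pol (M' + 1) (k + 1) (by omega)
  subst hk
  unfold costToGo
  rw [show k + 2 + M' - k = M' + 1 + 1 from by omega,
    show k + 2 + M' - (k + 1) = M' + 1 from by omega]
  rw [show M' + 1 + 1 - 1 = M' + 1 from rfl, show M' + 1 - 1 = M' from rfl]
  rw [sum_fun_succ]
  refine Finset.sum_congr rfl fun j _ => ?_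
  simp only [traj_cons_one, traj_cons_succ, traj_cons_two, traj_cons_last]
  rw [sum_split (hW := hW j)]
  congr 1
  refine congrArg _ ?_
  refine Finset.sum_congr rfl fun τ' _ => ?_
  have harith : ∀ i : Fin M', (k + 1) + ((i : ℕ) + 1) = (k + 1 + 1) + (i : ℕ) :=
    fun i => by omega
  have h2 : ∀ i : Fin M', ((i : ℕ) + 1) + 1 = (i : ℕ) + 2 := fun i => rfl
  simp only [Fin.prod_univ_succ, Fin.sum_univ_succ, Fin.val_zero, add_zero, zero_add,
    Fin.val_succ, traj_zero, h2, harith]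

/-- The dynamic-programming Q-values, indexed by the number of remaining stages. -/
def Qaux (N : ℕ) (p g : ℕ → S → A → S → ℝ) (gN : S → ℝ) : ℕ → S → A → ℝ
  | 0, s, _ => gN s
  | (m + 1), s, a =>
      ∑ j, p (N - (m + 1)) s a j * (g (N - (m + 1)) s a j + ⨅ b, Qaux N p g gN m j b)

lemma ciInf_eq_min {f : A → ℝ} {b0 : A} (h : ∀ b, f b0 ≤ f b) : (⨅ b, f b) = f b0 :=
  le_antisymm (ciInf_le (Set.finite_range f).bddBelow b0) (le_ciInf h)

/-- An optimal (greedy w.r.t. `Qaux`) policy. -/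
def polstar (N : ℕ) (p g : ℕ → S → A → S → ℝ) (gN : S → ℝ) (n : ℕ) (s : S) : A :=
  Classical.choose (Finite.exists_min fun b => Qaux N p g gN (N - n) s b)

lemma polstar_spec (N : ℕ) (p g : ℕ → S → A → S → ℝ) (gN : S → ℝ) (n : ℕ) (s : S) :
    ∀ b, Qaux N p g gN (N - n) s (polstar N p g gN n s) ≤ Qaux N p g gN (N - n) s b :=
  Classical.choose_spec (Finite.exists_min fun b => Qaux N p g gN (N - n) s b)

lemma iInf_Qaux_eq (N : ℕ) (p g : ℕ → S → A → S → ℝ) (gN : S → ℝ) (n m : ℕ)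
    (hm : N - n = m) (s : S) :
    (⨅ b, Qaux N p g gN m s b) = Qaux N p g gN m s (polstar N p g gN n s) := by
  subst hm
  exact ciInf_eq_min (polstar_spec N p g gN n s)

lemma key (N : ℕ) (p g : ℕ → S → A → S → ℝ) (gN : S → ℝ)
    (hp0 : ∀ n < N, ∀ i a j, 0 ≤ p n i a j)
    (hp1 : ∀ n < N, ∀ i a, ∑ j, p n i a j = 1) :
    ∀ n k, k + (n + 1) = N →
      (∀ pol s a, Qaux N p g gN (n + 1) s a ≤ costToGo N k p g gN pol s a) ∧
      (∀ s a, costToGo N k p g gN (polstar N p g gN) s a = Qaux N p g gN (n + 1) s a) := by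
  intro n
  induction n with
  | zero =>
    intro k hk
    have hbase : ∀ (pol : ℕ → S → A) (s : S) (a : A),
        costToGo N k p g gN pol s a = ∑ j, p k s a j * (g k s a j + gN j) :=
      fun pol s a => costToGo_base N k hk p g gN pol s a
    have hq : ∀ (s : S) (a : A),
        Qaux N p g gN (0 + 1) s a = ∑ j, p k s a j * (g k s a j + gN j) := by
      intro s a
      simp only [Qaux, ciInf_const]
      rw [show N - (0 + 1) = k from by omega]
    exact ⟨fun pol s a => le_of_eq ((hq s a).trans (hbase pol s a).symm),
           fun s a => (hbase _ s a).trans (hq s a).symm⟩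
  | succ n ih =>
    intro k hk
    obtain ⟨ih1, ih2⟩ := ih (k + 1) (by omega)
    have hstep : ∀ (pol : ℕ → S → A) (s : S) (a : A),
        costToGo N k p g gN pol s a
          = ∑ j, p k s a j * (g k s a j + costToGo N (k + 1) p g gN pol j (pol (k + 1) j)) :=
      fun pol s a => costToGo_step N n k (by omega) p g gN hp1 pol s a
    have hq : ∀ (s : S) (a : A),
        Qaux N p g gN (n + 1 + 1) s a
          = ∑ j, p k s a j * (g k s a j + ⨅ b, Qaux N p g gN (n + 1) j b) := by
      intro s a
      simp only [Qaux]
      rw [show N - (n + 1 + 1) = k from by omega]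
    constructor
    · intro pol s a
      rw [hstep pol s a, hq s a]
      refine Finset.sum_le_sum fun j _ => ?_
      refine mul_le_mul_of_nonneg_left (add_le_add le_rfl ?_) (hp0 k (by omega) s a j)
      exact le_trans (ciInf_le (Set.finite_range _).bddBelow (pol (k + 1) j))
        (ih1 pol j (pol (k + 1) j))
    · intro s a
      rw [hstep _ s a, hq s a]
      refine Finset.sum_congr rfl fun j _ => ?_
      rw [ih2 j (polstar N p g gN (k + 1) j),
        iInf_Qaux_eq N p g gN (k + 1) (n + 1) (by omega) j]

lemma Qstar_eq_Qaux (N : ℕ) (p g : ℕ → S → A → S → ℝ) (gN : S → ℝ)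
    (hp0 : ∀ n < N, ∀ i a j, 0 ≤ p n i a j)
    (hp1 : ∀ n < N, ∀ i a, ∑ j, p n i a j = 1)
    (k : ℕ) (hk : k < N) (s : S) (a : A) :
    Qstar N p g gN k s a = Qaux N p g gN (N - k) s a := by
  obtain ⟨n, hn⟩ : ∃ n, N - k = n + 1 := ⟨N - k - 1, by omega⟩
  obtain ⟨h1, h2⟩ := key N p g gN hp0 hp1 n k (by omega)
  rw [Qstar, if_pos hk, hn]
  refine le_antisymm ?_ (le_ciInf fun pol => h1 pol s a)
  have hbd : BddBelow (Set.range fun pol => costToGo N k p g gN pol s a) := by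
    refine ⟨Qaux N p g gN (n + 1) s a, ?_⟩
    rintro x ⟨pol, rfl⟩
    exact h1 pol s a
  exact le_trans (ciInf_le hbd (polstar N p g gN)) (le_of_eq (h2 s a))

end Main

/-- the optimal cost-to-go Q-values satisfy the Bellman recursion. -/
theorem Qstar_bellman {S A : Type*} [Fintype S] [DecidableEq S] [Nonempty S]
    [Fintype A] [Nonempty A]
    (N : ℕ) (hN : 1 ≤ N)
    (p g : ℕ → S → A → S → ℝ) (gN : S → ℝ)
    (hp0 : ∀ n < N, ∀ i a j, 0 ≤ p n i a j)
    (hp1 : ∀ n < N, ∀ i a, ∑ j, p n i a j = 1)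
    (k : ℕ) (hk : k < N) (s : S) (a : A) :
    Qstar N p g gN k s a =
      ∑ j, p k s a j * (g k s a j + ⨅ b : A, Qstar N p g gN (k + 1) j b) := by
  rw [Qstar_eq_Qaux N p g gN hp0 hp1 k hk s a]
  obtain ⟨n, hn⟩ : ∃ n, N - k = n + 1 := ⟨N - k - 1, by omega⟩
  rw [hn]
  simp only [Qaux]
  rw [show N - (n + 1) = k from by omega]
  refine Finset.sum_congr rfl fun j _ => ?_
  have hb : ∀ b, Qstar N p g gN (k + 1) j b = Qaux N p g gN n j b := by
    intro b
    by_cases h : k + 1 < N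
    · rw [Qstar_eq_Qaux N p g gN hp0 hp1 (k + 1) h j b,
        show N - (k + 1) = n from by omega]
    · have hn0 : n = 0 := by omega
      subst hn0
      rw [Qstar, if_neg h]
      rfl
  rw [iInf_congr hb]

end
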